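/- Let A be an LM_θ-algebra and (X(A),{f_i^A}_{i∈I}) its dual l_θP-space of prime filters. Then the map Θ_Oθ defined by Θ_Oθ(G) = {(a,b) ∈ A×A : σ_A(a) △ σ_A(b) ⊆ G} is a lattice isomorphism from the lattice (ordered by inclusion) of all open subsets G of X(A) whose complement X(A)\G is a θ-subset of X(A) onto the lattice of all θ-congruences on A. -/
import Mathlib


/-- An LM_θ-algebra over a linearly ordered index set `I`:
a bounded distributive lattice with operations `phi i` and `phibar i`. -/
structure LMAlg (I A : Type*) [LinearOrder I] [DistribLattice A] [BoundedOrder A] where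
  phi : I → A → A
  phibar : I → A → A
  phi_sup : ∀ i x y, phi i (x ⊔ y) = phi i x ⊔ phi i y
  phi_inf : ∀ i x y, phi i (x ⊓ y) = phi i x ⊓ phi i y
  phi_bot : ∀ i, phi i ⊥ = ⊥
  phi_top : ∀ i, phi i ⊤ = ⊤
  sup_phibar : ∀ i x, phi i x ⊔ phibar i x = ⊤
  inf_phibar : ∀ i x, phi i x ⊓ phibar i x = ⊥
  phi_phi : ∀ i j x, phi i (phi j x) = phi j x
  phi_mono : ∀ ⦃i j : I⦄, i ≤ j → ∀ x, phi i x ≤ phi j x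
  determined : ∀ x y, (∀ i, phi i x = phi i y) → x = y

/-- A prime filter of a bounded distributive lattice. -/
structure PrimeFilter (A : Type*) [DistribLattice A] [BoundedOrder A] where
  carrier : Set A
  top_mem : ⊤ ∈ carrier
  bot_notMem : ⊥ ∉ carrier
  mem_of_le : ∀ {a b : A}, a ∈ carrier → a ≤ b → b ∈ carrier
  inf_mem : ∀ {a b : A}, a ∈ carrier → b ∈ carrier → a ⊓ b ∈ carrier
  prime : ∀ {a b : A}, a ⊔ b ∈ carrier → a ∈ carrier ∨ b ∈ carrier

variable {I A : Type*} [LinearOrder I] [DistribLattice A] [BoundedOrder A]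

/-- Prime filters ordered by inclusion. -/
instance : PartialOrder (PrimeFilter A) where
  le P Q := P.carrier ⊆ Q.carrier
  le_refl _ _ hx := hx
  le_trans _ _ _ h1 h2 _ hx := h2 (h1 hx)
  le_antisymm P Q h1 h2 := by
    cases P; cases Q
    simp only [PrimeFilter.mk.injEq]
    exact subset_antisymm h1 h2

/-- The map `σ_A`. -/
def sigmaA (a : A) : Set (PrimeFilter A) := {P | a ∈ P.carrier}

/-- The Priestley topology on the set of prime filters, with sub-basis the sets
`σ_A a` and their complements. -/
instance : TopologicalSpace (PrimeFilter A) :=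
  TopologicalSpace.generateFrom
    (Set.range (sigmaA (A := A)) ∪ Set.range (fun a : A => (sigmaA a)ᶜ))

/-- The map `f_i^A (P) = φ_i⁻¹(P)` on prime filters. -/
def LMAlg.fA (L : LMAlg I A) (i : I) (P : PrimeFilter A) : PrimeFilter A where
  carrier := L.phi i ⁻¹' P.carrier
  top_mem := by simp only [Set.mem_preimage, L.phi_top]; exact P.top_mem
  bot_notMem := by simp only [Set.mem_preimage, L.phi_bot]; exact P.bot_notMem
  mem_of_le := by
    intro a b ha hab
    have h1 : L.phi i b = L.phi i a ⊔ L.phi i b := by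
      rw [← L.phi_sup, sup_eq_right.mpr hab]
    exact P.mem_of_le ha (le_sup_left.trans_eq h1.symm)
  inf_mem := by
    intro a b ha hb
    simp only [Set.mem_preimage, L.phi_inf]
    exact P.inf_mem ha hb
  prime := by
    intro a b h
    simp only [Set.mem_preimage, L.phi_sup] at h
    exact P.prime h

/-- An LM_θ-congruence: a bounded-lattice congruence compatible with all `phi i`, `phibar i`. -/
structure IsLMCongr (L : LMAlg I A) (r : A → A → Prop) : Prop where
  refl : ∀ x, r x x
  symm : ∀ {x y}, r x y → r y x
  trans : ∀ {x y z}, r x y → r y z → r x z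
  sup_congr : ∀ {x y u v}, r x y → r u v → r (x ⊔ u) (y ⊔ v)
  inf_congr : ∀ {x y u v}, r x y → r u v → r (x ⊓ u) (y ⊓ v)
  phi_congr : ∀ (i : I) {x y}, r x y → r (L.phi i x) (L.phi i y)
  phibar_congr : ∀ (i : I) {x y}, r x y → r (L.phibar i x) (L.phibar i y)

/-- A θ-congruence: a lattice congruence `r` with `r x y ↔ ∀ i, r (φ_i x) (φ_i y)`. -/
structure IsThetaCongr (L : LMAlg I A) (r : A → A → Prop) : Prop where
  refl : ∀ x, r x x
  symm : ∀ {x y}, r x y → r y x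
  trans : ∀ {x y z}, r x y → r y z → r x z
  sup_congr : ∀ {x y u v}, r x y → r u v → r (x ⊔ u) (y ⊔ v)
  inf_congr : ∀ {x y u v}, r x y → r u v → r (x ⊓ u) (y ⊓ v)
  theta : ∀ x y, r x y ↔ ∀ i : I, r (L.phi i x) (L.phi i y)

/-- `Y` is semimodal if `f i '' Y ⊆ Y` for all `i`. -/
def Semimodal {I X : Type*} (f : I → X → X) (Y : Set X) : Prop := ∀ i, f i '' Y ⊆ Y

/-- `Y` is modal if `f i ⁻¹' Y = Y` for all `i`. -/
def Modal {I X : Type*} (f : I → X → X) (Y : Set X) : Prop := ∀ i, f i ⁻¹' Y = Y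

/-- `Y` is a θ-subset if `⋃ i, f i '' Y ⊆ Y ⊆ closure (⋃ i, f i '' Y)`. -/
def ThetaSubset {I X : Type*} [TopologicalSpace X] (f : I → X → X) (Y : Set X) : Prop :=
  (⋃ i, f i '' Y) ⊆ Y ∧ Y ⊆ closure (⋃ i, f i '' Y)

/-- The relation `Θ` determined by an (open) subset `G` of the dual space:
`(a,b) ∈ Θ(G)` iff `σ_A a △ σ_A b ⊆ G`. -/
def thetaO (G : Set (PrimeFilter A)) : A → A → Prop :=
  fun a b => symmDiff (sigmaA a) (sigmaA b) ⊆ G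

/-- `r` is the principal LM_θ-congruence generated by `(a,b)`. -/
def IsPrincipalLMCongrOn (L : LMAlg I A) (r : A → A → Prop) (a b : A) : Prop :=
  IsLMCongr L r ∧ r a b ∧ ∀ s, IsLMCongr L s → s a b → ∀ x y, r x y → s x y

/-- `r` is the principal θ-congruence generated by `(a,b)`. -/
def IsPrincipalThetaCongrOn (L : LMAlg I A) (r : A → A → Prop) (a b : A) : Prop :=
  IsThetaCongr L r ∧ r a b ∧ ∀ s, IsThetaCongr L s → s a b → ∀ x y, r x y → s x y

/-- `r` is a principal LM_θ-congruence. -/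
def IsPrincipalLMCongr (L : LMAlg I A) (r : A → A → Prop) : Prop :=
  ∃ a b, IsPrincipalLMCongrOn L r a b

/-- `r` is a principal θ-congruence. -/
def IsPrincipalThetaCongr (L : LMAlg I A) (r : A → A → Prop) : Prop :=
  ∃ a b, IsPrincipalThetaCongrOn L r a b

/-- `r` is a Boolean LM_θ-congruence: a complemented element of the lattice of
LM_θ-congruences ordered by inclusion (the bottom element is equality and the
join of `r` and its complement, i.e. the least congruence containing both, is
the total relation). -/
def IsBooleanLMCongr (L : LMAlg I A) (r : A → A → Prop) : Prop :=
  IsLMCongr L r ∧ ∃ s, IsLMCongr L s ∧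
    (∀ x y, (r x y ∧ s x y) ↔ x = y) ∧
    (∀ t, IsLMCongr L t → (∀ x y, r x y → t x y) → (∀ x y, s x y → t x y) → ∀ x y, t x y)


/-! ### Auxiliary lemmas -/

section Aux

lemma mem_sigmaA {a : A} {P : PrimeFilter A} : P ∈ sigmaA a ↔ a ∈ P.carrier := Iff.rfl

lemma sigmaA_sup (a b : A) : sigmaA (A := A) (a ⊔ b) = sigmaA a ∪ sigmaA b := by
  ext P
  constructor
  · exact fun h => P.prime h
  · rintro (h | h)
    · exact P.mem_of_le h le_sup_left
    · exact P.mem_of_le h le_sup_right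

lemma sigmaA_inf (a b : A) : sigmaA (A := A) (a ⊓ b) = sigmaA a ∩ sigmaA b := by
  ext P
  constructor
  · exact fun h => ⟨P.mem_of_le h inf_le_left, P.mem_of_le h inf_le_right⟩
  · exact fun h => P.inf_mem h.1 h.2

lemma sigmaA_top : sigmaA (A := A) ⊤ = Set.univ :=
  Set.eq_univ_of_forall fun P => P.top_mem

lemma sigmaA_bot : sigmaA (A := A) ⊥ = ∅ :=
  Set.eq_empty_of_forall_notMem fun P => P.bot_notMem

lemma sigmaA_compl_eq {x x' : A} (hs : x ⊔ x' = ⊤) (hi : x ⊓ x' = ⊥) :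
    sigmaA (A := A) x' = (sigmaA x)ᶜ := by
  ext P
  constructor
  · intro h hx
    exact P.bot_notMem (hi ▸ P.inf_mem hx h)
  · intro h
    rcases P.prime (a := x) (b := x') (hs ▸ P.top_mem) with h1 | h1
    · exact absurd h1 h
    · exact h1

lemma isOpen_sigmaA (a : A) : IsOpen (sigmaA a) :=
  TopologicalSpace.GenerateOpen.basic _ (Or.inl ⟨a, rfl⟩)

lemma isOpen_sigmaA_compl (a : A) : IsOpen (sigmaA a)ᶜ :=
  TopologicalSpace.GenerateOpen.basic _ (Or.inr ⟨a, rfl⟩)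

lemma isClosed_sigmaA (a : A) : IsClosed (sigmaA a) :=
  ⟨isOpen_sigmaA_compl a⟩

lemma isOpen_sigmaA_symmDiff (a b : A) : IsOpen (symmDiff (sigmaA a) (sigmaA b)) := by
  rw [Set.symmDiff_def]
  exact (((isOpen_sigmaA a).sdiff (isClosed_sigmaA b)).union
    ((isOpen_sigmaA b).sdiff (isClosed_sigmaA a)))

lemma fA_preimage (L : LMAlg I A) (i : I) (a : A) :
    L.fA i ⁻¹' sigmaA a = sigmaA (L.phi i a) := rfl

lemma preimage_symmDiff' {α β : Type*} (f : α → β) (s t : Set β) :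
    f ⁻¹' (symmDiff s t) = symmDiff (f ⁻¹' s) (f ⁻¹' t) := by
  ext x
  simp [Set.mem_symmDiff]

lemma symmDiff_union_subset {α : Type*} (s t u v : Set α) :
    symmDiff (s ∪ t) (u ∪ v) ⊆ symmDiff s u ∪ symmDiff t v := by
  intro x hx
  rw [Set.mem_symmDiff] at hx
  simp only [Set.mem_union, Set.mem_symmDiff] at hx ⊢
  tauto

lemma symmDiff_inter_subset {α : Type*} (s t u v : Set α) :
    symmDiff (s ∩ t) (u ∩ v) ⊆ symmDiff s u ∪ symmDiff t v := by
  intro x hx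
  rw [Set.mem_symmDiff] at hx
  simp only [Set.mem_union, Set.mem_inter_iff, Set.mem_symmDiff] at hx ⊢
  tauto

/-- Every open set of the Priestley topology is, around each of its points,
refined by a basic open set of the form `σ a \ σ b`. -/
lemma exists_basic {G : Set (PrimeFilter A)} (hG : IsOpen G) :
    ∀ P ∈ G, ∃ a b : A, P ∈ sigmaA a \ sigmaA b ∧ sigmaA a \ sigmaA b ⊆ G := by
  have hG' : TopologicalSpace.GenerateOpen
      (Set.range (sigmaA (A := A)) ∪ Set.range (fun a : A => (sigmaA a)ᶜ)) G := hG
  clear hG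
  induction hG' with
  | basic s hs =>
    rcases hs with ⟨a, rfl⟩ | ⟨a, rfl⟩
    · intro P hP
      refine ⟨a, ⊥, ⟨hP, by simp [sigmaA_bot]⟩, fun Q hQ => hQ.1⟩
    · intro P hP
      refine ⟨⊤, a, ⟨P.top_mem, hP⟩, fun Q hQ => hQ.2⟩
  | univ =>
    intro P _
    exact ⟨⊤, ⊥, ⟨P.top_mem, by simp [sigmaA_bot]⟩, Set.subset_univ _⟩
  | inter s t _ _ ihs iht =>
    intro P hP
    obtain ⟨a₁, b₁, ⟨ha₁, hb₁⟩, hsub₁⟩ := ihs P hP.1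
    obtain ⟨a₂, b₂, ⟨ha₂, hb₂⟩, hsub₂⟩ := iht P hP.2
    refine ⟨a₁ ⊓ a₂, b₁ ⊔ b₂, ⟨?_, ?_⟩, ?_⟩
    · rw [sigmaA_inf]; exact ⟨ha₁, ha₂⟩
    · rw [sigmaA_sup]; rintro (h | h) <;> [exact hb₁ h; exact hb₂ h]
    · intro Q hQ
      rw [Set.mem_diff, sigmaA_inf, sigmaA_sup] at hQ
      refine ⟨hsub₁ ⟨hQ.1.1, fun h => hQ.2 (Or.inl h)⟩,
        hsub₂ ⟨hQ.1.2, fun h => hQ.2 (Or.inr h)⟩⟩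
  | sUnion S _ ih =>
    intro P hP
    obtain ⟨s, hsS, hPs⟩ := hP
    obtain ⟨a, b, hm, hsub⟩ := ih s hsS P hPs
    exact ⟨a, b, hm, hsub.trans (Set.subset_sUnion_of_mem hsS)⟩

/-- Zorn argument: if `¬ r u ⊥` then there is a prime filter containing `u`
which is saturated for the congruence `r`. -/
lemma exists_saturated_prime (L : LMAlg I A) {r : A → A → Prop} (hr : IsThetaCongr L r)
    {u : A} (hu : ¬ r u ⊥) :
    ∃ P : PrimeFilter A, u ∈ P.carrier ∧ ∀ c d, r c d → (c ∈ P.carrier ↔ d ∈ P.carrier) := by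
  classical
  set S : Set (Set A) := {F | u ∈ F ∧ (∀ ⦃x y : A⦄, x ∈ F → x ≤ y → y ∈ F) ∧
      (∀ ⦃x y : A⦄, x ∈ F → y ∈ F → x ⊓ y ∈ F) ∧
      (∀ c d, r c d → c ∈ F → d ∈ F) ∧ (∀ x ∈ F, ¬ r x ⊥)} with hS
  have hF0 : {x | r (u ⊓ x) u} ∈ S := by
    refine ⟨?_, ?_, ?_, ?_, ?_⟩
    · show r (u ⊓ u) u
      rw [inf_idem]; exact hr.refl u
    · intro x y hx hxy
      have h2 := hr.sup_congr hx (hr.refl (u ⊓ y))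
      rw [sup_inf_self, sup_eq_right.mpr (inf_le_inf_left u hxy)] at h2
      exact h2
    · intro x y hx hy
      have h2 := hr.inf_congr hx hy
      rw [inf_idem, ← inf_inf_distrib_left] at h2
      exact h2
    · intro c d hcd hc
      exact hr.trans (hr.inf_congr (hr.refl u) (hr.symm hcd)) hc
    · intro x hx hx0
      have h2 := hr.inf_congr (hr.refl u) hx0
      rw [inf_bot_eq] at h2
      exact hu (hr.trans (hr.symm hx) h2)
  have hchain : ∀ c ⊆ S, IsChain (· ⊆ ·) c → c.Nonempty →
      ∃ ub ∈ S, ∀ s ∈ c, s ⊆ ub := by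
    rintro c hcS hch ⟨F1, hF1⟩
    refine ⟨⋃₀ c, ⟨⟨F1, hF1, (hcS hF1).1⟩, ?_, ?_, ?_, ?_⟩,
      fun s hs => Set.subset_sUnion_of_mem hs⟩
    · rintro x y ⟨F, hF, hx⟩ hxy
      exact ⟨F, hF, (hcS hF).2.1 hx hxy⟩
    · rintro x y ⟨F, hF, hx⟩ ⟨F', hF', hy⟩
      rcases hch.total hF hF' with h | h
      · exact ⟨F', hF', (hcS hF').2.2.1 (h hx) hy⟩
      · exact ⟨F, hF, (hcS hF).2.2.1 hx (h hy)⟩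
    · rintro c' d hcd ⟨F, hF, hc⟩
      exact ⟨F, hF, (hcS hF).2.2.2.1 c' d hcd hc⟩
    · rintro x ⟨F, hF, hx⟩
      exact (hcS hF).2.2.2.2 x hx
  obtain ⟨M, -, hMmax⟩ := zorn_subset_nonempty S hchain _ hF0
  obtain ⟨huM, hup, hinf, hsat, hdisj⟩ := hMmax.1
  have key : ∀ a : A, a ∉ M → ∃ m ∈ M, r (m ⊓ a) ⊥ := by
    intro a haM
    by_contra hno
    push_neg at hno
    set Ma : Set A := {x | ∃ m ∈ M, r (m ⊓ a ⊓ x) (m ⊓ a)} with hMadef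
    have hMaS : Ma ∈ S := by
      refine ⟨⟨u, huM, ?_⟩, ?_, ?_, ?_, ?_⟩
      · rw [inf_right_comm, inf_idem]; exact hr.refl _
      · rintro x y ⟨m, hm, hx⟩ hxy
        refine ⟨m, hm, ?_⟩
        have h2 := hr.sup_congr hx (hr.refl (m ⊓ a ⊓ y))
        rw [sup_eq_right.mpr (inf_le_inf_left _ hxy), sup_eq_left.mpr inf_le_left] at h2
        exact h2
      · rintro x y ⟨m, hm, hx⟩ ⟨n, hn, hy⟩
        refine ⟨m ⊓ n, hinf hm hn, ?_⟩
        have h2 := hr.inf_congr hx hy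
        have e1 : (m ⊓ a ⊓ x) ⊓ (n ⊓ a ⊓ y) = m ⊓ n ⊓ a ⊓ (x ⊓ y) := by
          simp only [inf_assoc, inf_comm, inf_left_comm, inf_idem, inf_left_idem]
        have e2 : (m ⊓ a) ⊓ (n ⊓ a) = m ⊓ n ⊓ a := by
          simp only [inf_assoc, inf_comm, inf_left_comm, inf_idem, inf_left_idem]
        rw [e1, e2] at h2
        exact h2
      · rintro c d hcd ⟨m, hm, hc⟩
        exact ⟨m, hm, hr.trans (hr.inf_congr (hr.refl (m ⊓ a)) (hr.symm hcd)) hc⟩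
      · rintro x ⟨m, hm, hx⟩ hx0
        have h2 := hr.inf_congr (hr.refl (m ⊓ a)) hx0
        rw [inf_bot_eq] at h2
        exact hno m hm (hr.trans (hr.symm hx) h2)
    have hMMa : M ⊆ Ma := fun x hx =>
      ⟨x, hx, by rw [inf_right_comm, inf_idem]; exact hr.refl _⟩
    have haMa : a ∈ Ma := ⟨u, huM, by rw [inf_assoc, inf_idem]; exact hr.refl _⟩
    exact haM (hMmax.2 hMaS hMMa haMa)
  have hbot : (⊥ : A) ∉ M := fun h => hdisj ⊥ h (hr.refl ⊥)
  refine ⟨⟨M, hup huM le_top, hbot, fun hx hxy => hup hx hxy,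
    fun hx hy => hinf hx hy, ?_⟩, huM,
    fun c d hcd => ⟨hsat c d hcd, hsat d c (hr.symm hcd)⟩⟩
  intro a b hab
  by_contra hcon
  push_neg at hcon
  obtain ⟨m₁, hm₁, h1⟩ := key a hcon.1
  obtain ⟨m₂, hm₂, h2⟩ := key b hcon.2
  have hz : m₁ ⊓ m₂ ⊓ (a ⊔ b) ∈ M := hinf (hinf hm₁ hm₂) hab
  have h1' : r (m₁ ⊓ m₂ ⊓ a) ⊥ := by
    have h3 := hr.inf_congr (hr.refl m₂) h1
    rw [inf_bot_eq] at h3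
    have e : m₁ ⊓ m₂ ⊓ a = m₂ ⊓ (m₁ ⊓ a) := by
      simp only [inf_assoc, inf_comm, inf_left_comm]
    rw [e]; exact h3
  have h2' : r (m₁ ⊓ m₂ ⊓ b) ⊥ := by
    have h3 := hr.inf_congr (hr.refl m₁) h2
    rw [inf_bot_eq] at h3
    rw [inf_assoc]; exact h3
  have h3 := hr.sup_congr h1' h2'
  rw [sup_idem, ← inf_sup_left] at h3
  exact hdisj _ hz h3

/-- The open set associated to a congruence. -/
def GofR (r : A → A → Prop) : Set (PrimeFilter A) :=
  ⋃ a, ⋃ b, ⋃ (_ : r a b), symmDiff (sigmaA a) (sigmaA b)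

lemma mem_GofR {r : A → A → Prop} {P : PrimeFilter A} :
    P ∈ GofR r ↔ ∃ a b, r a b ∧ P ∈ symmDiff (sigmaA a) (sigmaA b) := by
  simp [GofR]

lemma subset_GofR {r : A → A → Prop} {a b : A} (h : r a b) :
    symmDiff (sigmaA a) (sigmaA b) ⊆ GofR r :=
  fun P hP => mem_GofR.mpr ⟨a, b, h, hP⟩

lemma isOpen_GofR (r : A → A → Prop) : IsOpen (GofR (A := A) r) :=
  isOpen_iUnion fun a => isOpen_iUnion fun b => isOpen_iUnion fun _ =>
    isOpen_sigmaA_symmDiff a b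

lemma fA_preimage_GofR (L : LMAlg I A) {r : A → A → Prop} (hr : IsThetaCongr L r) (i : I) :
    L.fA i ⁻¹' GofR r ⊆ GofR r := by
  intro P hP
  obtain ⟨c, d, hcd, hfP⟩ := mem_GofR.mp hP
  refine mem_GofR.mpr ⟨L.phi i c, L.phi i d, (hr.theta c d).mp hcd i, ?_⟩
  rw [← fA_preimage L i c, ← fA_preimage L i d, ← preimage_symmDiff']
  exact hfP

/-- The key Boolean step: for complemented elements `x`, `y`, if
`σ x ∆ σ y ⊆ G(r)` then `r x y`. -/
lemma rel_of_symmDiff_subset_GofR (L : LMAlg I A) {r : A → A → Prop} (hr : IsThetaCongr L r)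
    {x y x' y' : A} (hx1 : x ⊔ x' = ⊤) (hx2 : x ⊓ x' = ⊥)
    (hy1 : y ⊔ y' = ⊤) (hy2 : y ⊓ y' = ⊥)
    (h : symmDiff (sigmaA x) (sigmaA y) ⊆ GofR r) : r x y := by
  set u := (x ⊓ y') ⊔ (x' ⊓ y) with hudef
  have hσ : sigmaA (A := A) u = symmDiff (sigmaA x) (sigmaA y) := by
    rw [hudef, sigmaA_sup, sigmaA_inf, sigmaA_inf, sigmaA_compl_eq hy1 hy2,
      sigmaA_compl_eq hx1 hx2, Set.symmDiff_def]
    ext P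
    simp only [Set.mem_union, Set.mem_inter_iff, Set.mem_diff, Set.mem_compl_iff]
    tauto
  have hub : r u ⊥ := by
    by_contra hu
    obtain ⟨P, hPu, hPsat⟩ := exists_saturated_prime L hr hu
    have hPmem : P ∈ symmDiff (sigmaA x) (sigmaA y) := by
      rw [← hσ]; exact hPu
    obtain ⟨c, d, hcd, hP⟩ := mem_GofR.mp (h hPmem)
    rw [Set.mem_symmDiff] at hP
    have hiff := hPsat c d hcd
    rcases hP with ⟨h1, h2⟩ | ⟨h1, h2⟩
    · exact h2 (hiff.mp h1)
    · exact h2 (hiff.mpr h1)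
  have h1 : r (x ⊓ y') ⊥ := by
    have h3 := hr.inf_congr (hr.refl (x ⊓ y')) hub
    rwa [inf_eq_left.mpr le_sup_left, inf_bot_eq] at h3
  have h2 : r (x' ⊓ y) ⊥ := by
    have h3 := hr.inf_congr (hr.refl (x' ⊓ y)) hub
    rwa [inf_eq_left.mpr le_sup_right, inf_bot_eq] at h3
  have hx3 : r x (x ⊓ y) := by
    have h3 := hr.sup_congr (hr.refl (x ⊓ y)) h1
    rwa [← inf_sup_left, hy1, inf_top_eq, sup_bot_eq] at h3
  have hy3 : r y (x ⊓ y) := by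
    have h3 := hr.sup_congr (hr.refl (x ⊓ y)) h2
    rwa [← inf_sup_right, hx1, top_inf_eq, sup_bot_eq] at h3
  exact hr.trans hx3 (hr.symm hy3)

lemma rel_of_thetaO_GofR (L : LMAlg I A) {r : A → A → Prop} (hr : IsThetaCongr L r)
    {a b : A} (h : thetaO (GofR r) a b) : r a b := by
  refine (hr.theta a b).mpr fun i => ?_
  refine rel_of_symmDiff_subset_GofR L hr (L.sup_phibar i a) (L.inf_phibar i a)
    (L.sup_phibar i b) (L.inf_phibar i b) ?_
  rw [← fA_preimage L i a, ← fA_preimage L i b, ← preimage_symmDiff']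
  exact (Set.preimage_mono h).trans (fA_preimage_GofR L hr i)

lemma GofR_compl_thetaSubset (L : LMAlg I A) {r : A → A → Prop} (hr : IsThetaCongr L r) :
    ThetaSubset L.fA (GofR r)ᶜ := by
  constructor
  · rintro Q hQ
    simp only [Set.mem_iUnion, Set.mem_image] at hQ
    obtain ⟨i, P, hP, rfl⟩ := hQ
    intro hfG
    exact hP (fA_preimage_GofR L hr i hfG)
  · intro P hP
    rw [mem_closure_iff]
    intro O hO hPO
    by_contra hemp
    rw [Set.not_nonempty_iff_eq_empty] at hemp
    obtain ⟨a, b, ⟨hPa, hPb⟩, hsub⟩ := exists_basic hO P hPO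
    have claim : ∀ i, r (L.phi i (a ⊔ b)) (L.phi i b) := by
      intro i
      refine rel_of_symmDiff_subset_GofR L hr (L.sup_phibar i (a ⊔ b))
        (L.inf_phibar i (a ⊔ b)) (L.sup_phibar i b) (L.inf_phibar i b) ?_
      intro Q hQ
      by_contra hQG
      have hfQ : L.fA i Q ∈ symmDiff (sigmaA (a ⊔ b)) (sigmaA b) := by
        rw [← fA_preimage L i (a ⊔ b), ← fA_preimage L i b, ← preimage_symmDiff'] at hQ
        exact hQ
      have hfQ' : L.fA i Q ∈ sigmaA a \ sigmaA b := by
        rw [sigmaA_sup, Set.mem_symmDiff] at hfQ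
        rcases hfQ with ⟨h1, h2⟩ | ⟨h1, h2⟩
        · rcases h1 with h1 | h1
          · exact ⟨h1, h2⟩
          · exact absurd h1 h2
        · exact absurd (Or.inr h1) h2
      have hin : L.fA i Q ∈ O ∩ ⋃ j, L.fA j '' (GofR r)ᶜ :=
        ⟨hsub hfQ', Set.mem_iUnion.mpr ⟨i, Q, hQG, rfl⟩⟩
      rw [hemp] at hin
      exact hin
    have hrab : r (a ⊔ b) b := (hr.theta _ _).mpr claim
    refine hP (mem_GofR.mpr ⟨a ⊔ b, b, hrab, ?_⟩)
    rw [sigmaA_sup, Set.mem_symmDiff]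
    exact Or.inl ⟨Or.inl hPa, hPb⟩

lemma isThetaCongr_thetaO (L : LMAlg I A) {G : Set (PrimeFilter A)}
    (hG : ThetaSubset L.fA Gᶜ) : IsThetaCongr L (thetaO G) := by
  obtain ⟨hsemi, hdense⟩ := hG
  have hpre : ∀ i : I, L.fA i ⁻¹' G ⊆ G := by
    intro i P hPi
    by_contra hP
    exact hsemi (Set.mem_iUnion.mpr ⟨i, P, hP, rfl⟩) hPi
  refine ⟨?_, ?_, ?_, ?_, ?_, ?_⟩
  · intro x
    show symmDiff (sigmaA x) (sigmaA x) ⊆ G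
    rw [symmDiff_self]
    intro P hP
    simp at hP
  · intro x y h
    show symmDiff (sigmaA y) (sigmaA x) ⊆ G
    rwa [symmDiff_comm]
  · intro x y z hxy hyz P hP
    rw [Set.mem_symmDiff] at hP
    rcases hP with ⟨h1, h2⟩ | ⟨h1, h2⟩ <;> by_cases hy : P ∈ sigmaA y
    · exact hyz (Set.mem_symmDiff.mpr (Or.inl ⟨hy, h2⟩))
    · exact hxy (Set.mem_symmDiff.mpr (Or.inl ⟨h1, hy⟩))
    · exact hxy (Set.mem_symmDiff.mpr (Or.inr ⟨hy, h2⟩))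
    · exact hyz (Set.mem_symmDiff.mpr (Or.inr ⟨h1, hy⟩))
  · intro x y v w hxy hvw
    show symmDiff (sigmaA (x ⊔ v)) (sigmaA (y ⊔ w)) ⊆ G
    rw [sigmaA_sup, sigmaA_sup]
    exact (symmDiff_union_subset _ _ _ _).trans (Set.union_subset hxy hvw)
  · intro x y v w hxy hvw
    show symmDiff (sigmaA (x ⊓ v)) (sigmaA (y ⊓ w)) ⊆ G
    rw [sigmaA_inf, sigmaA_inf]
    exact (symmDiff_inter_subset _ _ _ _).trans (Set.union_subset hxy hvw)
  · intro x y
    constructor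
    · intro h i
      show symmDiff (sigmaA (L.phi i x)) (sigmaA (L.phi i y)) ⊆ G
      rw [← fA_preimage L i x, ← fA_preimage L i y, ← preimage_symmDiff']
      exact (Set.preimage_mono h).trans (hpre i)
    · intro h P hP
      by_contra hPG
      have hcl : P ∈ closure (⋃ i, L.fA i '' Gᶜ) := hdense hPG
      obtain ⟨Q', hQ'mem, hQ'in⟩ := mem_closure_iff.mp hcl _ (isOpen_sigmaA_symmDiff x y) hP
      obtain ⟨i, Q, hQ, rfl⟩ := by
        simpa only [Set.mem_iUnion, Set.mem_image] using hQ'in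
      have : Q ∈ symmDiff (sigmaA (L.phi i x)) (sigmaA (L.phi i y)) := by
        rw [← fA_preimage L i x, ← fA_preimage L i y, ← preimage_symmDiff']
        exact hQ'mem
      exact hQ (h i this)

lemma GofR_thetaO {G : Set (PrimeFilter A)} (hG : IsOpen G) : GofR (thetaO G) = G := by
  apply subset_antisymm
  · refine Set.iUnion_subset fun a => Set.iUnion_subset fun b => Set.iUnion_subset fun h => h
  · intro P hP
    obtain ⟨a, b, ⟨hPa, hPb⟩, hsub⟩ := exists_basic hG P hP
    have key : thetaO G (a ⊔ b) b := by
      show symmDiff (sigmaA (a ⊔ b)) (sigmaA b) ⊆ G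
      rw [sigmaA_sup]
      intro Q hQ
      rw [Set.mem_symmDiff] at hQ
      refine hsub ?_
      rcases hQ with ⟨h1, h2⟩ | ⟨h1, h2⟩
      · rcases h1 with h1 | h1
        · exact ⟨h1, h2⟩
        · exact absurd h1 h2
      · exact absurd (Or.inr h1) h2
    refine mem_GofR.mpr ⟨a ⊔ b, b, key, ?_⟩
    rw [sigmaA_sup, Set.mem_symmDiff]
    exact Or.inl ⟨Or.inl hPa, hPb⟩

lemma thetaO_GofR (L : LMAlg I A) {r : A → A → Prop} (hr : IsThetaCongr L r) :
    thetaO (GofR r) = r := by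
  funext a b
  exact propext ⟨fun h => rel_of_thetaO_GofR L hr h, fun h => subset_GofR h⟩

lemma thetaO_mono {G G' : Set (PrimeFilter A)} (h : G ⊆ G') :
    ∀ a b : A, thetaO G a b → thetaO G' a b :=
  fun _ _ hab => hab.trans h

lemma GofR_mono {r s : A → A → Prop} (h : ∀ a b, r a b → s a b) :
    GofR (A := A) r ⊆ GofR s := by
  intro P hP
  obtain ⟨a, b, hab, hm⟩ := mem_GofR.mp hP
  exact mem_GofR.mpr ⟨a, b, h a b hab, hm⟩

lemma rel_le_iff {r s : A → A → Prop} : r ≤ s ↔ ∀ a b, r a b → s a b :=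
  Iff.rfl

end Aux

/-- `Θ_Oθ` is a lattice isomorphism from the lattice of open subsets of `X(A)`
whose complement is a θ-subset onto the lattice of θ-congruences on `A`. -/
theorem stmt1 {I A : Type*} [LinearOrder I] [DistribLattice A] [BoundedOrder A]
    (L : LMAlg I A) :
    ∃ e : {G : Set (PrimeFilter A) // IsOpen G ∧ ThetaSubset L.fA Gᶜ} ≃o
          {r : A → A → Prop // IsThetaCongr L r},
      ∀ G, (e G).val = fun a b => symmDiff (sigmaA a) (sigmaA b) ⊆ G.val := by
  refine ⟨{ toFun := fun G => ⟨thetaO G.1, isThetaCongr_thetaO L G.2.2⟩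
            invFun := fun r => ⟨GofR r.1, isOpen_GofR r.1, GofR_compl_thetaSubset L r.2⟩
            left_inv := fun G => Subtype.ext (GofR_thetaO G.2.1)
            right_inv := fun r => Subtype.ext (thetaO_GofR L r.2)
            map_rel_iff' := ?_ }, fun G => rfl⟩
  intro G G'
  simp only [Equiv.coe_fn_mk, Subtype.mk_le_mk]
  constructor
  · intro h
    have h' : ∀ a b : A, thetaO G.1 a b → thetaO G'.1 a b := rel_le_iff.mp h
    have h1 : GofR (thetaO G.1) ⊆ GofR (thetaO G'.1) := GofR_mono h'
    rw [GofR_thetaO G.2.1, GofR_thetaO G'.2.1] at h1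
    exact h1
  · intro h
    exact rel_le_iff.mpr (thetaO_mono h)
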